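/- Let R be a commutative ring of characteristic 0 with fraction field K, and let f(x) = x·Σ_{k≥0} (a_k/k!) x^k ∈ K[[x]] with a_0 = 1 and a_k ∈ R for all k. Then the compositional inverse f^{-1}(x) ∈ x + x²K[[x]] is also of the form x·Σ_{k≥0} (b_k/k!) x^k with b_0 = 1 and b_k ∈ R for all k. -/

import Mathlib

/-- Composition `f(g(x))` of formal power series, intended for `g` with zero
constant coefficient. -/
noncomputable def PowerSeries.comp {K : Type*} [CommSemiring K] (f g : PowerSeries K) :
    PowerSeries K :=
  PowerSeries.mk fun n =>
    PowerSeries.coeff n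
      (∑ k ∈ Finset.range (n + 1), PowerSeries.C (PowerSeries.coeff k f) * g ^ k)

/-!
Call `U ∈ K⟦X⟧` Hurwitz if `m! · coeff m U` lies in the image of `R` for every `m`. Since
`(p + q)! = C(p + q, q) · p! · q!`, Hurwitz series are closed under products. Write
`f = X v` and `f⁻¹ = X u`; comparing coefficients of `X^(m+2)` in `f(X u) = X` gives
`u_{m+1} = -∑_{j ≤ m} v_{j+1} · [X^(m-j)] u^(j+2)`, whose right side only involves
coefficients of `u` of order `≤ m`. Multiplying by `(m+1)!` and using the binomial identity
once more shows by induction that `u` is Hurwitz, which is the claim.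
-/

open PowerSeries Finset
open scoped Nat

namespace PowerSeries

variable {R K : Type*} [CommRing R] [CommRing K] [Algebra R K]

theorem coeff_comp (n : ℕ) (f g : K⟦X⟧) :
    coeff n (f.comp g) = ∑ k ∈ range (n + 1), coeff k f * coeff n (g ^ k) := by
  simp only [PowerSeries.comp, coeff_mk, map_sum, coeff_C_mul]

theorem coeff_succ_eq_of_X_mul_comp_X_mul {v u : K⟦X⟧} (hv : coeff 0 v = 1)
    (h : (X * v).comp (X * u) = X) (m : ℕ) :
    coeff (m + 1) u = -∑ j ∈ range (m + 1), coeff (j + 1) v * coeff (m - j) (u ^ (j + 2)) := by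
  have hm : coeff (m + 2) ((X * v).comp (X * u)) = 0 := by simp [h, coeff_X]
  rw [coeff_comp, sum_range_succ', sum_range_succ'] at hm
  simp only [coeff_zero_X_mul, coeff_succ_X_mul, hv, zero_mul, add_zero, one_mul,
    zero_add, pow_one] at hm
  rw [eq_neg_iff_add_eq_zero, add_comm, ← hm]
  congr 1
  refine sum_congr rfl fun j hj => ?_
  have hjm : m + 2 = (m - j) + (j + 2) := by have := mem_range.mp hj; omega
  rw [mul_pow, hjm, coeff_X_pow_mul]

theorem factorial_add_mul_mem_bot {p q : ℕ} {t : K}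
    (h : (p ! * q ! : K) * t ∈ (⊥ : Subalgebra R K)) :
    ((p + q)! : K) * t ∈ (⊥ : Subalgebra R K) := by
  have hfact : ((p + q)! : K) * t = ((p + q).choose q : K) * ((p ! * q ! : K) * t) := by
    rw [← Nat.add_choose_mul_factorial_mul_factorial]
    push_cast
    ring
  rw [hfact]
  exact Subalgebra.mul_mem _ (Subalgebra.natCast_mem _ _) h

variable (R) in
def IsHurwitzBelow (N : ℕ) (U : K⟦X⟧) : Prop :=
  ∀ m < N, (m ! : K) * coeff m U ∈ (⊥ : Subalgebra R K)

theorem isHurwitzBelow_one (N : ℕ) : IsHurwitzBelow R N (1 : K⟦X⟧) := by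
  intro m _
  rcases eq_or_ne m 0 with rfl | hm
  · simp
  · simp [coeff_one, hm]

theorem IsHurwitzBelow.mul {N : ℕ} {U V : K⟦X⟧} (hU : IsHurwitzBelow R N U)
    (hV : IsHurwitzBelow R N V) : IsHurwitzBelow R N (U * V) := by
  intro m hm
  rw [coeff_mul, mul_sum]
  refine Subalgebra.sum_mem _ fun ⟨i, j⟩ hij => ?_
  obtain rfl := mem_antidiagonal.mp hij
  refine factorial_add_mul_mem_bot ?_
  rw [mul_mul_mul_comm]
  exact Subalgebra.mul_mem _ (hU i (by omega)) (hV j (by omega))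

theorem IsHurwitzBelow.pow {N : ℕ} {U : K⟦X⟧} (hU : IsHurwitzBelow R N U) (n : ℕ) :
    IsHurwitzBelow R N (U ^ n) := by
  induction n with
  | zero => exact isHurwitzBelow_one N
  | succ n ih => exact pow_succ U n ▸ ih.mul hU

theorem isHurwitzBelow_succ_iff {N : ℕ} {U : K⟦X⟧} :
    IsHurwitzBelow R (N + 1) U ↔
      IsHurwitzBelow R N U ∧ (N ! : K) * coeff N U ∈ (⊥ : Subalgebra R K) :=
  ⟨fun h => ⟨fun m hm => h m (by omega), h N N.lt_succ_self⟩, fun ⟨h, hN⟩ m hm =>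
    (Nat.lt_succ_iff_lt_or_eq.mp hm).elim (h m) fun hmN => hmN ▸ hN⟩

theorem isHurwitzBelow_of_X_mul_comp_X_mul {v u : K⟦X⟧} (hv0 : coeff 0 v = 1)
    (hv : ∀ m, (m ! : K) * coeff m v ∈ (⊥ : Subalgebra R K)) (hu0 : coeff 0 u = 1)
    (h : (X * v).comp (X * u) = X) (N : ℕ) : IsHurwitzBelow R N u := by
  induction N with
  | zero => exact fun m hm => absurd hm m.not_lt_zero
  | succ N ih =>
    refine isHurwitzBelow_succ_iff.mpr ⟨ih, ?_⟩
    cases N with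
    | zero => simp [hu0]
    | succ n =>
      rw [coeff_succ_eq_of_X_mul_comp_X_mul hv0 h, mul_neg, mul_sum]
      refine Subalgebra.neg_mem _ (Subalgebra.sum_mem _ fun j hj => ?_)
      have hjn : j ≤ n := Nat.lt_succ_iff.mp (mem_range.mp hj)
      rw [show n + 1 = (j + 1) + (n - j) by omega]
      refine factorial_add_mul_mem_bot ?_
      rw [mul_mul_mul_comm]
      exact Subalgebra.mul_mem _ (hv _) (ih.pow (j + 2) (n - j) (by omega))

end PowerSeries

/-- If `f(x) = x ∑ (a_k/k!) x^k` with `a_0 = 1` and all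
`a_k ∈ R`, then the compositional inverse `f⁻¹` has the same shape:
`x ∑ (b_k/k!) x^k` with `b_0 = 1` and all `b_k ∈ R`. -/
theorem inverse_of_factorial_type {R K : Type*} [CommRing R] [CharZero R]
    [Field K] [Algebra R K] [IsFractionRing R K]
    (f : PowerSeries K) (hf0 : PowerSeries.coeff 0 f = 0)
    (a : ℕ → R) (ha0 : a 0 = 1)
    (ha : ∀ k, PowerSeries.coeff (k + 1) f
      = algebraMap R K (a k) / (Nat.factorial k : K))
    (g : PowerSeries K) (hg0 : PowerSeries.coeff 0 g = 0)
    (hg1 : PowerSeries.coeff 1 g = 1)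
    (hginv : f.comp g = PowerSeries.X) :
    ∃ b : ℕ → R, b 0 = 1 ∧ ∀ k,
      PowerSeries.coeff (k + 1) g = algebraMap R K (b k) / (Nat.factorial k : K) := by
  have inj := IsFractionRing.injective R K
  have : CharZero K := charZero_of_injective_algebraMap inj
  have hfact (k : ℕ) : (k ! : K) ≠ 0 := Nat.cast_ne_zero.mpr k.factorial_ne_zero
  obtain ⟨v, rfl⟩ := X_dvd_iff.mpr
    (by rwa [← coeff_zero_eq_constantCoeff_apply] : constantCoeff f = 0)
  obtain ⟨u, rfl⟩ := X_dvd_iff.mpr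
    (by rwa [← coeff_zero_eq_constantCoeff_apply] : constantCoeff g = 0)
  simp only [coeff_succ_X_mul] at ha hg1 ⊢
  have hv0 : coeff 0 v = 1 := by simpa [ha0] using ha 0
  have hv (m : ℕ) : (m ! : K) * coeff m v ∈ (⊥ : Subalgebra R K) :=
    Algebra.mem_bot.mpr ⟨a m, by rw [ha, mul_div_cancel₀ _ (hfact m)]⟩
  have hu := isHurwitzBelow_of_X_mul_comp_X_mul hv0 hv hg1 hginv
  choose b hb using fun k => Algebra.mem_bot.mp (hu (k + 1) k k.lt_succ_self)
  refine ⟨b, inj ?_, fun k => ?_⟩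
  · simp [hb, hg1]
  · rw [hb, mul_div_cancel_left₀ _ (hfact k)]
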